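/- arXiv:1507.05194 — 3 statements merged into one kernel-verified Lean document; each statement's English description precedes it below -/
import Mathlib

section
/- If the audience p is k-soluble, then N T = ∑_{j=0}^{k} p j where T = ∑_{j=0}^{k} p j; that is, a standing ovation occurs within a number of steps equal to the total audience size. -/
/-- The applause process of an audience `p`: `N 0 = p 0` and
`N (t+1) = ∑_{j=0}^{N t} p j`. -/
def applause (p : ℕ → ℕ) : ℕ → ℕ
  | 0 => p 0
  | t + 1 => ∑ j ∈ Finset.range (applause p t + 1), p j

/-- A standing ovation occurs for the audience `p` (supported on `[0,k]`)
iff the applause process reaches the total audience size. -/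
def StandingOvation (k : ℕ) (p : ℕ → ℕ) : Prop :=
  ∃ t, applause p t = ∑ j ∈ Finset.range (k + 1), p j

/-- `p` is `s`-soluble iff for every `1 ≤ s' ≤ s`, `∑_{j=0}^{s'-1} p j ≥ s'`. -/
def Soluble (s : ℕ) (p : ℕ → ℕ) : Prop :=
  ∀ s', 1 ≤ s' → s' ≤ s → s' ≤ ∑ j ∈ Finset.range s', p j

/-- `r(p)`: the least number `n` of invited friends (with shyness levels in `[0,k]`)
such that the augmented audience `p + q` produces a standing ovation. -/
noncomputable def ovationNumber (k : ℕ) (p : ℕ → ℕ) : ℕ :=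
  sInf {n : ℕ | ∃ q : ℕ → ℕ, (∀ j, k < j → q j = 0) ∧
    (∑ j ∈ Finset.range (k + 1), q j) = n ∧
    StandingOvation k (fun j => p j + q j)}

/-! Solubility makes the number of standing spectators grow by at least one per step until it
reaches `k`; from then on every spectator (all shyness levels are `≤ k`) is standing. Solubility
at `s' = k` also forces the total audience `T` to be at least `k`, so `T` steps suffice. -/

lemma sum_range_succ_eq_of_support_le {k m : ℕ} {p : ℕ → ℕ} (hp : ∀ j, k < j → p j = 0)
    (hkm : k ≤ m) :
    ∑ j ∈ Finset.range (m + 1), p j = ∑ j ∈ Finset.range (k + 1), p j := by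
  refine (Finset.sum_subset (Finset.range_subset_range.2 (by omega)) fun j hj hjk => ?_).symm
  simp only [Finset.mem_range] at hj hjk
  exact hp j (by omega)

lemma Soluble.min_le_sum_range {s : ℕ} {p : ℕ → ℕ} (h : Soluble s p) (m : ℕ) :
    min m s ≤ ∑ j ∈ Finset.range m, p j := by
  rcases le_total m s with hms | hsm
  · rcases Nat.eq_zero_or_pos m with rfl | hm
    · simp
    · simpa [hms] using h m hm hms
  · rcases Nat.eq_zero_or_pos s with rfl | hs
    · simp
    · calc min m s = s := min_eq_right hsm
        _ ≤ ∑ j ∈ Finset.range s, p j := h s hs le_rfl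
        _ ≤ ∑ j ∈ Finset.range m, p j :=
          Finset.sum_le_sum_of_subset (Finset.range_subset_range.2 hsm)

lemma applause_succ (p : ℕ → ℕ) (t : ℕ) :
    applause p (t + 1) = ∑ j ∈ Finset.range (applause p t + 1), p j := rfl

lemma Soluble.min_le_applause {k : ℕ} {p : ℕ → ℕ} (h : Soluble k p) (t : ℕ) :
    min (t + 1) k ≤ applause p t := by
  induction t with
  | zero => simpa [applause] using h.min_le_sum_range 1
  | succ t ih =>
    rw [applause_succ]
    have := h.min_le_sum_range (applause p t + 1)
    omega

lemma applause_eq_total_of_le {k : ℕ} {p : ℕ → ℕ} (hp : ∀ j, k < j → p j = 0)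
    (hsol : Soluble k p) {t : ℕ} (hkt : k ≤ t) :
    applause p t = ∑ j ∈ Finset.range (k + 1), p j := by
  cases t with
  | zero => simpa [applause] using sum_range_succ_eq_of_support_le hp hkt
  | succ t =>
    have hk : k ≤ applause p t := by
      have := hsol.min_le_applause t
      omega
    rw [applause_succ, sum_range_succ_eq_of_support_le hp hk]

theorem stmt_3 (k : ℕ) (p : ℕ → ℕ) (hp : ∀ j, k < j → p j = 0)
    (hsol : Soluble k p) :
    applause p (∑ j ∈ Finset.range (k + 1), p j) =
      ∑ j ∈ Finset.range (k + 1), p j := by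
  have hk : k ≤ ∑ j ∈ Finset.range (k + 1), p j := by
    have := hsol.min_le_sum_range (k + 1)
    omega
  exact applause_eq_total_of_le hp hsol hk
end

section
/- Let m = max_{1 ≤ s ≤ k} max(0, s − ∑_{j=0}^{s-1} p j) (with m = 0 if k = 0). Then the audience p + m·δ₀ obtained from p by adding m spectators of shyness level 0 is k-soluble, and hence produces a standing ovation. -/
/-!
Adding `m` spectators of shyness `0` raises every partial sum `∑_{j<s} p j` by `m`, and `m` is
exactly the largest deficit `s - ∑_{j<s} p j`, so the new audience is `k`-soluble. Solubility
forces the applause process to grow by at least one per step until it reaches `k`; after that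
everybody of shyness at most `k`, i.e. the whole audience, stands.
-/

open Finset

theorem Soluble.min_le_sum_range_s10 {s : ℕ} {q : ℕ → ℕ} (hs : Soluble s q) (n : ℕ) :
    min n s ≤ ∑ j ∈ range n, q j := by
  rcases le_total n s with hns | hsn
  · rcases Nat.eq_zero_or_pos n with rfl | hn
    · simp
    · simpa [min_eq_left hns] using hs n hn hns
  · rcases Nat.eq_zero_or_pos s with rfl | hs0
    · simp
    · calc min n s = s := min_eq_right hsn
        _ ≤ ∑ j ∈ range s, q j := hs s hs0 le_rfl
        _ ≤ ∑ j ∈ range n, q j := sum_le_sum_of_subset (range_subset_range.2 hsn)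

theorem Soluble.min_le_applause_s10 {s : ℕ} {q : ℕ → ℕ} (hs : Soluble s q) (t : ℕ) :
    min t s ≤ applause q t := by
  induction t with
  | zero => simp
  | succ t ih =>
    have := hs.min_le_sum_range_s10 (applause q t + 1)
    simp only [applause]
    omega

theorem sum_range_eq_of_support {k n : ℕ} {q : ℕ → ℕ} (hq : ∀ j, k < j → q j = 0)
    (hkn : k < n) : ∑ j ∈ range n, q j = ∑ j ∈ range (k + 1), q j :=
  (sum_subset (range_subset_range.2 hkn) fun j _ hj => hq j (by simpa using hj)).symm

theorem Soluble.standingOvation {k : ℕ} {q : ℕ → ℕ} (hq : ∀ j, k < j → q j = 0)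
    (hs : Soluble k q) : StandingOvation k q := by
  have hk : k ≤ applause q k := by simpa using hs.min_le_applause_s10 k
  exact ⟨k + 1, sum_range_eq_of_support hq (by omega)⟩

theorem sum_range_add_ite_zero (p : ℕ → ℕ) (m : ℕ) {s : ℕ} (hs : 1 ≤ s) :
    ∑ j ∈ range s, (p j + if j = 0 then m else 0) = ∑ j ∈ range s, p j + m := by
  rw [sum_add_distrib, sum_ite_eq' (range s) 0 (fun _ => m), if_pos (mem_range.2 hs)]

theorem soluble_add_ite_zero {k m : ℕ} {p : ℕ → ℕ}
    (hm : ∀ s ∈ Icc 1 k, s - ∑ j ∈ range s, p j ≤ m) :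
    Soluble k (fun j => p j + if j = 0 then m else 0) := by
  intro s h1 h2
  have := hm s (mem_Icc.2 ⟨h1, h2⟩)
  rw [sum_range_add_ite_zero p m h1]
  omega

theorem stmt_10 (k : ℕ) (p : ℕ → ℕ) (hp : ∀ j, k < j → p j = 0)
    (m : ℕ) (hm : m = (Finset.Icc 1 k).sup (fun s => s - ∑ j ∈ Finset.range s, p j)) :
    Soluble k (fun j => p j + if j = 0 then m else 0) ∧
      StandingOvation k (fun j => p j + if j = 0 then m else 0) := by
  have hsol : Soluble k (fun j => p j + if j = 0 then m else 0) :=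
    soluble_add_ite_zero fun s hs => hm ▸ le_sup (f := fun s => s - ∑ j ∈ range s, p j) hs
  refine ⟨hsol, hsol.standingOvation fun j hj => ?_⟩
  simp [hp j hj, show j ≠ 0 by omega]
end

section
/- The minimum in the definition of r(p) is achieved using only friends of shyness level 0: there exists q : ℕ → ℕ with q 0 = r(p) and q j = 0 for all j ≥ 1 such that a standing ovation occurs for the audience p + q. -/
/-!
Concentrating all invited friends at shyness level `0` can only help: it makes every prefix sum
`∑_{j<M} (p + q) j` as large as possible for the given number of friends, and the applause process
is monotone in the prefix sums of the audience. So from a minimal invitation `q` producing an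
ovation, the invitation of `r(p)` friends of shyness `0` reaches the same total audience at the
same time.
-/

open Finset

lemma sum_range_le_sum_range_of_supported {k : ℕ} {p : ℕ → ℕ} (hp : ∀ j, k < j → p j = 0)
    (M : ℕ) : ∑ j ∈ range M, p j ≤ ∑ j ∈ range (k + 1), p j := by
  rcases le_or_gt M (k + 1) with h | h
  · exact sum_le_sum_of_subset (range_subset_range.2 h)
  · refine (sum_subset (range_subset_range.2 h.le) fun j _ hj => hp j ?_).ge
    simpa using hj

lemma applause_eq_sum_range (p : ℕ → ℕ) (t : ℕ) :
    ∃ M, applause p t = ∑ j ∈ range M, p j := by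
  cases t with
  | zero => exact ⟨1, by simp [applause]⟩
  | succ t => exact ⟨_, rfl⟩

lemma applause_le_sum_of_supported {k : ℕ} {p : ℕ → ℕ} (hp : ∀ j, k < j → p j = 0) (t : ℕ) :
    applause p t ≤ ∑ j ∈ range (k + 1), p j := by
  obtain ⟨M, hM⟩ := applause_eq_sum_range p t
  exact hM ▸ sum_range_le_sum_range_of_supported hp M

lemma standingOvation_of_sum_le_applause {k : ℕ} {p : ℕ → ℕ} (hp : ∀ j, k < j → p j = 0)
    {t : ℕ} (ht : ∑ j ∈ range (k + 1), p j ≤ applause p t) : StandingOvation k p :=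
  ⟨t, (applause_le_sum_of_supported hp t).antisymm ht⟩

lemma applause_mono_of_sum_range_le {p p' : ℕ → ℕ}
    (h : ∀ M, ∑ j ∈ range M, p j ≤ ∑ j ∈ range M, p' j) (t : ℕ) :
    applause p t ≤ applause p' t := by
  induction t with
  | zero => simpa [applause] using h 1
  | succ t ih =>
    calc ∑ j ∈ range (applause p t + 1), p j
        ≤ ∑ j ∈ range (applause p' t + 1), p j :=
          sum_le_sum_of_subset (range_subset_range.2 (by omega))
      _ ≤ ∑ j ∈ range (applause p' t + 1), p' j := h _

lemma sum_range_pi_single_zero {m M : ℕ} (hM : 0 < M) :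
    ∑ j ∈ range M, (Pi.single 0 m : ℕ → ℕ) j = m := by
  simp [sum_pi_single', hM]

lemma ovationNumber_set_nonempty (k : ℕ) (p : ℕ → ℕ) (hp : ∀ j, k < j → p j = 0) :
    {n : ℕ | ∃ q : ℕ → ℕ, (∀ j, k < j → q j = 0) ∧
      (∑ j ∈ range (k + 1), q j) = n ∧ StandingOvation k (fun j => p j + q j)}.Nonempty := by
  have hq : ∀ j, k < j → (Pi.single 0 (k + 1) : ℕ → ℕ) j = 0 := fun j hj =>
    Pi.single_eq_of_ne (by omega) _
  refine ⟨k + 1, (Pi.single 0 (k + 1) : ℕ → ℕ), hq, sum_range_pi_single_zero (by omega),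
    standingOvation_of_sum_le_applause (t := 1) (fun j hj => by simp [hp j hj, hq j hj]) ?_⟩
  refine sum_le_sum_of_subset (range_subset_range.2 ?_)
  simp only [applause, Pi.single_eq_same]
  omega

lemma exists_standingOvation_ovationNumber (k : ℕ) (p : ℕ → ℕ) (hp : ∀ j, k < j → p j = 0) :
    ∃ q : ℕ → ℕ, (∀ j, k < j → q j = 0) ∧
      (∑ j ∈ range (k + 1), q j) = ovationNumber k p ∧
      StandingOvation k (fun j => p j + q j) :=
  Nat.sInf_mem (ovationNumber_set_nonempty k p hp)

lemma standingOvation_pi_single_zero {k : ℕ} {p q : ℕ → ℕ} (hp : ∀ j, k < j → p j = 0)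
    (hq : ∀ j, k < j → q j = 0) (hov : StandingOvation k (fun j => p j + q j)) :
    StandingOvation k (fun j => p j + (Pi.single 0 (∑ j ∈ range (k + 1), q j) : ℕ → ℕ) j) := by
  set m := ∑ j ∈ range (k + 1), q j
  have hsupp : ∀ j, k < j → p j + (Pi.single 0 m : ℕ → ℕ) j = 0 := fun j hj => by
    simp [hp j hj, Pi.single_eq_of_ne (show j ≠ 0 by omega)]
  have hprefix : ∀ M,
      ∑ j ∈ range M, (p j + q j) ≤ ∑ j ∈ range M, (p j + (Pi.single 0 m : ℕ → ℕ) j) := by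
    intro M
    rcases M.eq_zero_or_pos with rfl | hM
    · simp
    rw [sum_add_distrib, sum_add_distrib, sum_range_pi_single_zero hM]
    exact Nat.add_le_add_left (sum_range_le_sum_range_of_supported hq M) _
  obtain ⟨t, ht⟩ := hov
  refine standingOvation_of_sum_le_applause hsupp (t := t) ?_
  calc ∑ j ∈ range (k + 1), (p j + (Pi.single 0 m : ℕ → ℕ) j)
      = ∑ j ∈ range (k + 1), (p j + q j) := by
        rw [sum_add_distrib, sum_add_distrib, sum_range_pi_single_zero (by omega)]
    _ = applause (fun j => p j + q j) t := ht.symm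
    _ ≤ applause (fun j => p j + (Pi.single 0 m : ℕ → ℕ) j) t :=
        applause_mono_of_sum_range_le hprefix t

theorem stmt_13 (k : ℕ) (p : ℕ → ℕ) (hp : ∀ j, k < j → p j = 0) :
    ∃ q : ℕ → ℕ, q 0 = ovationNumber k p ∧ (∀ j, 1 ≤ j → q j = 0) ∧
      StandingOvation k (fun j => p j + q j) := by
  obtain ⟨q, hq, hsum, hov⟩ := exists_standingOvation_ovationNumber k p hp
  refine ⟨(Pi.single 0 (ovationNumber k p) : ℕ → ℕ), Pi.single_eq_same _ _,
    fun j hj => Pi.single_eq_of_ne (by omega) _, ?_⟩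
  exact hsum ▸ standingOvation_pi_single_zero hp hq hov
end
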